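/- arXiv:0709.2700 — 2 statements merged into one kernel-verified Lean document; each statement's English description precedes it below -/
import Mathlib

section
/- Let Γ be a connected finite simplicial graph with at least two vertices, and let v₁, …, v_k be vertices such that for each i, vᵢ ≤ vᵢ₊₁ but not vᵢ₊₁ ≤ vᵢ (i.e. [v₁] < [v₂] < ⋯ < [v_k]). Then there exists j with 0 ≤ j ≤ k such that d(vᵢ, vᵢ₊₁) = 2 for all i < j and d(vᵢ, vᵢ₊₁) = 1 for all i ≥ j; moreover, for every i > j, any two distinct vertices of [vᵢ] are adjacent (i.e. vᵢ ∈ V_ab). -/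
/-!
If `v ≤ w`, every neighbour of `v` other than `w` is a neighbour of `w`. Hence a non-adjacent
step `v < w` of the chain has a common neighbour and `d(v, w) = 2`; an adjacent step `v ≤ w`
followed by `w < u` makes `w` adjacent to `u`, so the adjacent steps form a final segment; and
an adjacent step `v ≤ w` makes `[w]` a clique, since every other vertex of `[w]` lies above `v`
and is therefore adjacent to `w`.
-/

open SimpleGraph

namespace RaagPaper

variable {V : Type*}

/-- The link of a vertex: the set of vertices adjacent to it. -/
def lk (G : SimpleGraph V) (v : V) : Set V := G.neighborSet v

/-- The (closed) star of a vertex: `st(v) = lk(v) ∪ {v}`. -/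
def st (G : SimpleGraph V) (v : V) : Set V := insert v (G.neighborSet v)

/-- The preorder on vertices: `v ≤ w` iff `lk(v) ⊆ st(w)`. -/
def vle (G : SimpleGraph V) (v w : V) : Prop := lk G v ⊆ st G w

/-- Equivalence of vertices: `v ∼ w` iff `v ≤ w` and `w ≤ v`. -/
def vequiv (G : SimpleGraph V) (v w : V) : Prop := vle G v w ∧ vle G w v

/-- The equivalence class `[v]` of a vertex `v`. -/
def cls (G : SimpleGraph V) (v : V) : Set V := {u | vequiv G u v}

/-- `[v]` is maximal with respect to the partial order induced by `≤`. -/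
def IsMaximalClass (G : SimpleGraph V) (v : V) : Prop := ∀ w, vle G v w → vle G w v

/-- `L_[v] = lk(v) \ [v]`. -/
def Lset (G : SimpleGraph V) (v : V) : Set V := lk G v \ cls G v

/-- `J_[v] = [v] ∪ L_[v]`, the join associated to `[v]`. -/
def Jset (G : SimpleGraph V) (v : V) : Set V := cls G v ∪ Lset G v

/-- `v ∈ V_ab` : any two distinct vertices of `[v]` are adjacent (so `A_[v]` is abelian). -/
def Vab (G : SimpleGraph V) (v : V) : Prop :=
  ∀ x ∈ cls G v, ∀ y ∈ cls G v, x ≠ y → G.Adj x y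

/-- `[v] < [w]` in the partial order on equivalence classes. -/
def vlt (G : SimpleGraph V) (v w : V) : Prop := vle G v w ∧ ¬ vle G w v

lemma adj_of_vle_of_adj {G : SimpleGraph V} {u v w : V} (h : vle G u v) (huw : G.Adj u w)
    (hne : w ≠ v) : G.Adj v w :=
  (h huw).resolve_left hne

lemma vle_refl (G : SimpleGraph V) (v : V) : vle G v v := fun _ hu => Or.inr hu

lemma vle_trans {G : SimpleGraph V} {u v w : V} (huv : vle G u v) (hvw : vle G v w) :
    vle G u w := by
  intro z (huz : G.Adj u z)
  by_cases hzv : z = v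
  · subst hzv
    by_cases huw : u = w
    · exact Or.inr (huw ▸ huz)
    have hwu : G.Adj w u := adj_of_vle_of_adj hvw huz.symm huw
    by_cases hwz : w = z
    · exact Or.inl hwz.symm
    exact Or.inr (adj_of_vle_of_adj huv hwu.symm hwz).symm
  · exact hvw (adj_of_vle_of_adj huv huz hzv)

lemma vlt.ne {G : SimpleGraph V} {v w : V} (h : vlt G v w) : v ≠ w := by
  rintro rfl
  exact h.2 (vle_refl G v)

lemma vab_of_adj_of_vle {G : SimpleGraph V} {v w : V} (hvw : vle G v w) (hadj : G.Adj v w) :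
    Vab G w := by
  have hadj_w : ∀ x ∈ cls G w, x ≠ w → G.Adj x w := fun x hx hxw =>
    adj_of_vle_of_adj (vle_trans hvw hx.2) hadj (Ne.symm hxw)
  intro x hx y hy hxy
  by_cases hxw : x = w
  · subst hxw
    exact (hadj_w y hy (Ne.symm hxy)).symm
  · exact (adj_of_vle_of_adj hy.2 (hadj_w x hx hxw).symm hxy).symm

lemma adj_of_adj_of_vle_of_vlt {G : SimpleGraph V} {v w u : V} (hadj : G.Adj v w)
    (hvw : vle G v w) (hwu : vlt G w u) : G.Adj w u := by
  have hvu : v ≠ u := by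
    rintro rfl
    exact hwu.2 hvw
  exact adj_of_vle_of_adj hvw (adj_of_vle_of_adj hwu.1 hadj.symm hvu).symm hwu.ne.symm

lemma dist_eq_two_of_vle {G : SimpleGraph V} {v w : V} (hr : G.Reachable v w)
    (hvw : vle G v w) (hne : v ≠ w) (hnadj : ¬ G.Adj v w) : G.dist v w = 2 := by
  obtain ⟨p⟩ := hr
  have hvu : G.Adj v p.snd := p.adj_snd (p.not_nil_of_ne hne)
  have hwu : G.Adj w p.snd := adj_of_vle_of_adj hvw hvu (fun h => hnadj (h ▸ hvu))
  have hedist : G.edist v w = 2 := edist_eq_two_iff.mpr ⟨hne, hnadj, ⟨p.snd, hvu, hwu⟩⟩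
  simp [SimpleGraph.dist, hedist]

lemma adj_of_chain {G : SimpleGraph V} {k : ℕ} {vs : ℕ → V}
    (hchain : ∀ i, 1 ≤ i → i < k → vlt G (vs i) (vs (i + 1))) {j : ℕ} (hj : 1 ≤ j)
    (hadj : G.Adj (vs j) (vs (j + 1))) {i : ℕ} (hji : j ≤ i) (hik : i < k) :
    G.Adj (vs i) (vs (i + 1)) := by
  induction i, hji using Nat.le_induction with
  | base => exact hadj
  | succ n hjn ih =>
    exact adj_of_adj_of_vle_of_vlt (ih (by omega)) (hchain n (by omega) (by omega)).1
      (hchain (n + 1) (by omega) hik)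

theorem chain_structure_general {V : Type*} (G : SimpleGraph V)
    (hconn : G.Connected) (k : ℕ) (vs : ℕ → V)
    (hchain : ∀ i, 1 ≤ i → i < k →
      vle G (vs i) (vs (i + 1)) ∧ ¬ vle G (vs (i + 1)) (vs i)) :
    ∃ j ≤ k,
      (∀ i, 1 ≤ i → i < k → i < j → G.dist (vs i) (vs (i + 1)) = 2) ∧
      (∀ i, 1 ≤ i → i < k → j ≤ i → G.dist (vs i) (vs (i + 1)) = 1) ∧
      (∀ i, j < i → i ≤ k → Vab G (vs i)) := by
  classical
  -- `j` is the first index of an adjacent step, or `k` if there is none.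
  have hex : ∃ j, k ≤ j ∨ (1 ≤ j ∧ G.Adj (vs j) (vs (j + 1))) := ⟨k, Or.inl le_rfl⟩
  have hadj : ∀ i, Nat.find hex ≤ i → i < k → 1 ≤ i ∧ G.Adj (vs i) (vs (i + 1)) := by
    intro i hji hik
    rcases Nat.find_spec hex with hkj | ⟨hj1, hj⟩
    · omega
    · exact ⟨by omega, adj_of_chain hchain hj1 hj hji hik⟩
  refine ⟨Nat.find hex, Nat.find_min' hex (Or.inl le_rfl), ?_, ?_, ?_⟩
  · intro i hi1 hik hij
    have hnadj : ¬ G.Adj (vs i) (vs (i + 1)) := fun h => Nat.find_min hex hij (Or.inr ⟨hi1, h⟩)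
    exact dist_eq_two_of_vle (hconn.preconnected _ _) (hchain i hi1 hik).1
      (vlt.ne (hchain i hi1 hik)) hnadj
  · intro i _ hik hji
    exact dist_eq_one_iff_adj.mpr (hadj i hji hik).2
  · intro i hji hik
    obtain ⟨i, rfl⟩ : ∃ n, i = n + 1 := ⟨i - 1, by omega⟩
    obtain ⟨hi1, hi⟩ := hadj i (by omega) (by omega)
    exact vab_of_adj_of_vle (hchain i hi1 (by omega)).1 hi

/-- given a strict chain `[v₁] < [v₂] < ⋯ < [v_k]`, there is a `j`, `0 ≤ j ≤ k`,
with `d(vᵢ, vᵢ₊₁) = 2` for all `i < j`, `d(vᵢ, vᵢ₊₁) = 1` for all `i ≥ j`, and `vᵢ ∈ V_ab`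
for all `i > j`. -/
theorem chain_structure {V : Type*} [Fintype V] [Nontrivial V] (G : SimpleGraph V)
    (hconn : G.Connected) (k : ℕ) (hk : 1 ≤ k) (vs : ℕ → V)
    (hchain : ∀ i, 1 ≤ i → i < k →
      vle G (vs i) (vs (i + 1)) ∧ ¬ vle G (vs (i + 1)) (vs i)) :
    ∃ j ≤ k,
      (∀ i, 1 ≤ i → i < k → i < j → G.dist (vs i) (vs (i + 1)) = 2) ∧
      (∀ i, 1 ≤ i → i < k → j ≤ i → G.dist (vs i) (vs (i + 1)) = 1) ∧
      (∀ i, j < i → i ≤ k → Vab G (vs i)) :=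
  chain_structure_general G hconn k vs hchain

end RaagPaper
end

section
/- Let Γ be a connected finite simplicial graph, A_Γ the associated right-angled Artin group, and [v] a maximal equivalence class. Suppose α, β ∈ Aut(A_Γ) each map A_{J_[v]} onto A_{J_[v]}, and suppose β(x) = g·α(x)·g⁻¹ for some fixed g ∈ A_Γ and all x ∈ A_Γ. Then there exists h ∈ A_{J_[v]} such that β(x) = h·α(x)·h⁻¹ for all x ∈ A_{J_[v]}. (Hence the restriction to A_{J_[v]} of a representative as in the restriction homomorphism is well defined up to an inner automorphism of A_{J_[v]}.) -/
/-!
Sending every generator outside `Θ` to `1` respects the commutation relations, so it defines a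
retraction `ρ` of `A_Γ` onto the special subgroup `A_Θ`. For `x ∈ A_J`, both `α x` and `β x` lie in
`A_J` and are fixed by `ρ`, so applying `ρ` to `β x = g α(x) g⁻¹` gives
`β x = ρ(g) α(x) ρ(g)⁻¹` with `ρ(g) ∈ A_J`.
-/

open SimpleGraph

namespace RaagPaper

variable {V : Type*}

/-- The commutator relations defining the right-angled Artin group of `G`. -/
def raagRels (G : SimpleGraph V) : Set (FreeGroup V) :=
  {r | ∃ u w : V, G.Adj u w ∧
    r = FreeGroup.of u * FreeGroup.of w * (FreeGroup.of u)⁻¹ * (FreeGroup.of w)⁻¹}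

/-- The right-angled Artin group `A_Γ`. -/
abbrev Raag (G : SimpleGraph V) : Type _ := PresentedGroup (raagRels G)

/-- The generator of `A_Γ` corresponding to a vertex. -/
def gen (G : SimpleGraph V) (v : V) : Raag G := PresentedGroup.of v

/-- The special subgroup `A_Θ` generated by a set `Θ` of vertices. -/
def Asub (G : SimpleGraph V) (Θ : Set V) : Subgroup (Raag G) :=
  Subgroup.closure (gen G '' Θ)

/-- The subgroup of inner automorphisms of a group. -/
def Inn (A : Type*) [Group A] : Subgroup (MulAut A) := (MulAut.conj : A →* MulAut A).range

instance (A : Type*) [Group A] : (Inn A).Normal := by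
  constructor
  intro n hn φ
  obtain ⟨g, rfl⟩ := hn
  exact ⟨φ g, by ext x; simp [Inn, MulAut.conj]⟩

/-- The outer automorphism group `Out(A) = Aut(A)/Inn(A)`. -/
abbrev OutG (A : Type*) [Group A] : Type _ := MulAut A ⧸ Inn A

/-- The canonical projection `Aut(A) → Out(A)`. -/
def outMk (A : Type*) [Group A] : MulAut A →* OutG A := QuotientGroup.mk' (Inn A)

theorem exists_mem_conj_eq_of_retraction {A : Type*} [Group A] {H : Subgroup A} (ρ : A →* A)
    (hρ_mem : ∀ x, ρ x ∈ H) (hρ_fix : ∀ x ∈ H, ρ x = x) {f₁ f₂ : A → A}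
    (hf₁ : Set.MapsTo f₁ H H) (hf₂ : Set.MapsTo f₂ H H) (g : A)
    (hg : ∀ x ∈ H, f₂ x = g * f₁ x * g⁻¹) :
    ∃ h ∈ H, ∀ x ∈ H, f₂ x = h * f₁ x * h⁻¹ := by
  refine ⟨ρ g, hρ_mem g, fun x hx => ?_⟩
  calc f₂ x = ρ (f₂ x) := (hρ_fix _ (hf₂ hx)).symm
    _ = ρ g * ρ (f₁ x) * (ρ g)⁻¹ := by rw [hg x hx, map_mul, map_mul, map_inv]
    _ = ρ g * f₁ x * (ρ g)⁻¹ := by rw [hρ_fix _ (hf₁ hx)]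

theorem commute_gen (G : SimpleGraph V) {u w : V} (h : G.Adj u w) :
    Commute (gen G u) (gen G w) := by
  have hrel : gen G u * gen G w * (gen G u)⁻¹ * (gen G w)⁻¹ = 1 :=
    PresentedGroup.one_of_mem ⟨u, w, h, rfl⟩
  rwa [mul_inv_eq_one, mul_inv_eq_iff_eq_mul] at hrel

open Classical in
noncomputable def retraction (G : SimpleGraph V) (Θ : Set V) : Raag G →* Raag G :=
  PresentedGroup.toGroup (f := fun u => if u ∈ Θ then gen G u else 1) <| by
    rintro _ ⟨u, w, hadj, rfl⟩
    have hc : Commute (if u ∈ Θ then gen G u else 1) (if w ∈ Θ then gen G w else 1) := by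
      split_ifs
      exacts [commute_gen G hadj, Commute.one_right _, Commute.one_left _, Commute.one_left _]
    simp only [map_mul, map_inv, FreeGroup.lift_apply_of, hc.eq, mul_inv_cancel_right,
      mul_inv_cancel]

theorem retraction_gen (G : SimpleGraph V) (Θ : Set V) [DecidablePred (· ∈ Θ)] (u : V) :
    retraction G Θ (gen G u) = if u ∈ Θ then gen G u else 1 := by
  simp only [retraction, gen, PresentedGroup.toGroup.of]
  congr

theorem retraction_eq_self_of_mem (G : SimpleGraph V) (Θ : Set V) {x : Raag G}
    (hx : x ∈ Asub G Θ) : retraction G Θ x = x := by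
  classical
  refine MonoidHom.eqOn_closure (f := retraction G Θ) (g := MonoidHom.id _) ?_ hx
  rintro _ ⟨u, hu, rfl⟩
  simp [retraction_gen, hu]

theorem retraction_mem (G : SimpleGraph V) (Θ : Set V) (x : Raag G) :
    retraction G Θ x ∈ Asub G Θ := by
  classical
  refine PresentedGroup.generated_by _ ((Asub G Θ).comap (retraction G Θ)) (fun u => ?_) x
  change retraction G Θ (gen G u) ∈ Asub G Θ
  rw [retraction_gen]
  split_ifs with hu
  exacts [Subgroup.subset_closure ⟨u, hu, rfl⟩, one_mem _]

theorem restriction_well_defined_up_to_inner_general {V : Type*}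
    (G : SimpleGraph V) (v : V)
    (α β : MulAut (Raag G)) (g : Raag G)
    (hα : (Asub G (Jset G v)).map α.toMonoidHom = Asub G (Jset G v))
    (hβ : (Asub G (Jset G v)).map β.toMonoidHom = Asub G (Jset G v))
    (hg : ∀ x : Raag G, β x = g * α x * g⁻¹) :
    ∃ h ∈ Asub G (Jset G v), ∀ x ∈ Asub G (Jset G v), β x = h * α x * h⁻¹ := by
  exact exists_mem_conj_eq_of_retraction (retraction G (Jset G v)) (retraction_mem G _)
    (fun _ => retraction_eq_self_of_mem G _) (fun x hx => hα ▸ Subgroup.mem_map_of_mem _ hx)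
    (fun x hx => hβ ▸ Subgroup.mem_map_of_mem _ hx) g fun x _ => hg x

/-- if `α, β ∈ Aut(A_Γ)` both map `A_{J_[v]}` onto itself ( `[v]` maximal ) and
`β = conj(g) ∘ α` for some `g ∈ A_Γ`, then on `A_{J_[v]}` the automorphisms `α` and `β` differ
by conjugation by an element `h ∈ A_{J_[v]}`. -/
theorem restriction_well_defined_up_to_inner {V : Type*} [Fintype V] [Nonempty V]
    (G : SimpleGraph V) (hconn : G.Connected) (v : V) (hv : IsMaximalClass G v)
    (α β : MulAut (Raag G)) (g : Raag G)
    (hα : (Asub G (Jset G v)).map α.toMonoidHom = Asub G (Jset G v))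
    (hβ : (Asub G (Jset G v)).map β.toMonoidHom = Asub G (Jset G v))
    (hg : ∀ x : Raag G, β x = g * α x * g⁻¹) :
    ∃ h ∈ Asub G (Jset G v), ∀ x ∈ Asub G (Jset G v), β x = h * α x * h⁻¹ :=
  restriction_well_defined_up_to_inner_general G v α β g hα hβ hg

end RaagPaper
end
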